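/- arXiv:1903.06317 — 6 statements merged into one kernel-verified Lean document; each statement's English description precedes it below -/
import Mathlib

section
/- For every nonnegative integer n, ∑_{k=0}^{⌊n/2⌋} (1/2^{n-k}) · C(n-k, k) = 2/3 + (1/3)·(-1/2)^n. -/
/-!
Writing the `k`-th term as `C(n - k, k) x ^ (n - k) y ^ k` with `x = 1/2`, `y = 1`, Pascal's rule
gives the Fibonacci-type recurrence `s (n + 2) = x s (n + 1) + x y s n`, here
`s (n + 2) = (s (n + 1) + s n) / 2`. Its characteristic roots are `1` and `-1/2`, and the initial
values `s 0 = s 1 = 1` fix the coefficients `2/3` and `1/3`.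
-/

open Finset Finset.Nat

section ShortDiagonal

variable {R : Type*} [CommSemiring R]

def shortDiagonalSum (x y : R) (n : ℕ) : R :=
  ∑ p ∈ antidiagonal n, (p.1.choose p.2 : R) * x ^ p.1 * y ^ p.2

theorem shortDiagonalSum_add_two (x y : R) (n : ℕ) :
    shortDiagonalSum x y (n + 2) =
      x * shortDiagonalSum x y (n + 1) + x * y * shortDiagonalSum x y n := by
  simp only [shortDiagonalSum]
  rw [sum_antidiagonal_succ, sum_antidiagonal_succ', sum_antidiagonal_succ' (n := n)]
  simp only [Nat.choose_zero_succ, Nat.choose_zero_right, Nat.choose_succ_succ, Nat.succ_eq_add_one,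
    Nat.cast_zero, Nat.cast_add, zero_mul, zero_add, add_mul, sum_add_distrib, mul_add, mul_sum]
  ring_nf

end ShortDiagonal

theorem shortDiagonalSum_half_one (n : ℕ) :
    shortDiagonalSum (1 / 2 : ℝ) 1 n = 2 / 3 + 1 / 3 * (-1 / 2) ^ n := by
  induction n using Nat.twoStepInduction with
  | zero => norm_num [shortDiagonalSum]
  | one => norm_num [shortDiagonalSum, sum_antidiagonal_succ]
  | more n ih₀ ih₁ =>
    rw [shortDiagonalSum_add_two, ih₀, ih₁]
    ring

/-- For every `n`, `∑_{k=0}^{⌊n/2⌋} (1/2^{n-k}) · C(n-k, k) = 2/3 + (1/3)·(-1/2)^n`. -/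
theorem binomial_short_diagonal_sum (n : ℕ) :
    ∑ k ∈ Finset.range (n / 2 + 1), ((n - k).choose k : ℝ) / 2 ^ (n - k)
      = 2 / 3 + (1 / 3) * (-1 / 2 : ℝ) ^ n := by
  calc ∑ k ∈ range (n / 2 + 1), ((n - k).choose k : ℝ) / 2 ^ (n - k)
      = ∑ k ∈ range (n + 1), ((n - k).choose k : ℝ) / 2 ^ (n - k) := by
        refine sum_subset (range_subset_range.2 (by omega)) fun k _ hk ↦ ?_
        rw [mem_range] at hk
        rw [Nat.choose_eq_zero_of_lt (by omega), Nat.cast_zero, zero_div]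
    _ = shortDiagonalSum (1 / 2 : ℝ) 1 n := by
        rw [shortDiagonalSum, ← sum_antidiagonal_swap, sum_antidiagonal_eq_sum_range_succ_mk]
        simp [div_eq_mul_inv]
    _ = 2 / 3 + 1 / 3 * (-1 / 2) ^ n := shortDiagonalSum_half_one n
end

section
/- For every real t with 0 < t < 1 and every nonnegative integer n, ∑_{k≥0} C(n-k,k) t^k (1-t)^{n-2k} = (1 - (-t)^{n+1})/(1 + t), where the sum is over k with 2k ≤ n. -/
/-!
Pascal's rule `C(m+1, k+1) = C(m, k) + C(m, k+1)` makes the short-diagonal sums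
`S n = ∑ₖ C(n-k,k) aᵏ bⁿ⁻²ᵏ` satisfy the Fibonacci-type recurrence `S (n+2) = b S (n+1) + a S n`.
For `a = t`, `b = 1 - t` the characteristic polynomial `x² - (1-t)x - t` has roots `1` and `-t`,
and `(1 + t) S n = 1 - (-t)ⁿ⁺¹` follows by induction.
-/

open Finset

namespace ShortDiagonal

section CommSemiring

variable {R : Type*} [CommSemiring R] (a b : R)

/-- With `a = t`, `b = 1 - t` this is the Bernstein polynomial `B_k^{n-k}(t)`. The truncated
exponent `n - 2 * k` is harmless: the binomial coefficient vanishes once `n < 2 * k`. -/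
def term (n k : ℕ) : R := ((n - k).choose k : R) * a ^ k * b ^ (n - 2 * k)

def sum (n : ℕ) : R := ∑ k ∈ range (n + 1), term a b n k

theorem term_eq_zero_of_lt {n k : ℕ} (h : n < 2 * k) : term a b n k = 0 := by
  simp [term, Nat.choose_eq_zero_of_lt (show n - k < k by omega)]

theorem term_zero_right (n : ℕ) : term a b n 0 = b ^ n := by
  simp [term]

theorem term_add_two_succ (n k : ℕ) :
    term a b (n + 2) (k + 1) = b * term a b (n + 1) (k + 1) + a * term a b n k := by
  rcases lt_trichotomy n (2 * k) with h | rfl | h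
  · simp only [term_eq_zero_of_lt a b h, term_eq_zero_of_lt a b (show n + 2 < 2 * (k + 1) by omega),
      term_eq_zero_of_lt a b (show n + 1 < 2 * (k + 1) by omega), mul_zero, add_zero]
  · rw [term_eq_zero_of_lt a b (show 2 * k + 1 < 2 * (k + 1) by omega)]
    simp only [term, show 2 * k + 2 - (k + 1) = k + 1 by omega, show 2 * k - k = k by omega,
      show 2 * k + 2 - 2 * (k + 1) = 0 by omega, Nat.sub_self, Nat.choose_self]
    ring
  · obtain ⟨m, rfl⟩ : ∃ m, n = 2 * k + 1 + m := ⟨n - (2 * k + 1), by omega⟩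
    simp only [term, Nat.choose_succ_succ, Nat.cast_add,
      show 2 * k + 1 + m + 2 - (k + 1) = k + m + 1 + 1 by omega,
      show 2 * k + 1 + m + 1 - (k + 1) = k + m + 1 by omega,
      show 2 * k + 1 + m - k = k + m + 1 by omega,
      show 2 * k + 1 + m + 2 - 2 * (k + 1) = m + 1 by omega,
      show 2 * k + 1 + m + 1 - 2 * (k + 1) = m by omega,
      show 2 * k + 1 + m - 2 * k = m + 1 by omega]
    ring

theorem sum_range_term_eq_sum_range_half {n m : ℕ} (h : n / 2 < m) :
    ∑ k ∈ range m, term a b n k = ∑ k ∈ range (n / 2 + 1), term a b n k := by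
  refine (sum_subset (fun k hk => ?_) fun k hk hk' => term_eq_zero_of_lt a b ?_).symm
  · simp only [mem_range] at hk ⊢
    omega
  · simp only [mem_range] at hk hk'
    omega

theorem sum_eq_sum_range {n m : ℕ} (h : n / 2 < m) :
    sum a b n = ∑ k ∈ range m, term a b n k := by
  rw [sum, sum_range_term_eq_sum_range_half a b h,
    sum_range_term_eq_sum_range_half a b (show n / 2 < n + 1 by omega)]

theorem sum_add_two (n : ℕ) : sum a b (n + 2) = b * sum a b (n + 1) + a * sum a b n := by
  rw [sum_eq_sum_range a b (m := n + 3) (by omega), sum_eq_sum_range a b (m := n + 3) (by omega),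
    sum_eq_sum_range a b (m := n + 2) (by omega), sum_range_succ' (term a b (n + 2)),
    sum_range_succ' (term a b (n + 1))]
  simp only [term_add_two_succ, sum_add_distrib, term_zero_right, ← mul_sum]
  ring

end CommSemiring

theorem one_add_mul_sum {R : Type*} [CommRing R] (t : R) (n : ℕ) :
    (1 + t) * sum t (1 - t) n = 1 - (-t) ^ (n + 1) := by
  induction n using Nat.twoStepInduction with
  | zero => simp [sum, term]
  | one => simp [sum, sum_range_succ, term, ← mul_self_sub_mul_self, sq]
  | more n ih ih' =>
    rw [sum_add_two, mul_add, mul_left_comm, ih', mul_left_comm, ih]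
    ring

end ShortDiagonal

theorem bernstein_short_diagonal_sum_general (t : ℝ) (h0 : 0 < t) (n : ℕ) :
    ∑ k ∈ Finset.range (n / 2 + 1), ((n - k).choose k : ℝ) * t ^ k * (1 - t) ^ (n - 2 * k)
      = (1 - (-t) ^ (n + 1)) / (1 + t) := by
  rw [eq_div_iff (by positivity), mul_comm, ← ShortDiagonal.one_add_mul_sum,
    ShortDiagonal.sum_eq_sum_range t (1 - t) (Nat.lt_succ_self _)]
  rfl

/-- For `0 < t < 1` and every `n`,
`∑_{k, 2k ≤ n} C(n-k,k) t^k (1-t)^{n-2k} = (1 - (-t)^{n+1})/(1 + t)`. -/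
theorem bernstein_short_diagonal_sum (t : ℝ) (h0 : 0 < t) (h1 : t < 1) (n : ℕ) :
    ∑ k ∈ Finset.range (n / 2 + 1), ((n - k).choose k : ℝ) * t ^ k * (1 - t) ^ (n - 2 * k)
      = (1 - (-t) ^ (n + 1)) / (1 + t) :=
  bernstein_short_diagonal_sum_general t h0 n
end

section
/- For 0 < h < t < 1, set a = t/h and b = (1-t)/h. Then ∑_{n=0}^∞ B_k^n(t;h) = (1-h)/(t-h) for every nonnegative integer k, where B_k^n(t;h) = C(n,k) · [∏_{i=0}^{k-1}(t+ih) · ∏_{i=0}^{n-k-1}(1-t+ih)] / ∏_{i=0}^{n-1}(1+ih). -/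
/-!
Write `S_k(N) = ∑_{n<N} B_k^n`. The recurrences of the Pólya urn telescope:
`(t - h) S_0(N) = 1 - h - (1 - h + N h) B_0^N` and
`(k + 1) (S_k(N + 1) - S_{k+1}(N + 1)) = (N + 1) B_k^N`.
As `n ↦ B_k^n` is eventually decreasing, summability forces `n B_k^n → 0`, so the remainders
vanish and every column has the sum of column `0`, which is `(1 - h) / (t - h)` because `h < t`.
-/

open Finset Filter Topology

/-- The h-Bernstein polynomial (Pólya–Eggenberger probability mass function)
`B_k^n(t;h) = C(n,k)·[∏_{i<k}(t+ih)·∏_{i<n-k}(1-t+ih)] / ∏_{i<n}(1+ih)`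
(it is `0` when `n < k` since then `C(n,k) = 0`). -/
noncomputable def hBernstein (n k : ℕ) (t h : ℝ) : ℝ :=
  (n.choose k : ℝ) *
    ((∏ i ∈ Finset.range k, (t + i * h)) * ∏ i ∈ Finset.range (n - k), (1 - t + i * h)) /
    ∏ i ∈ Finset.range n, (1 + i * h)

-- Olivier's theorem: for `n ≥ 2N`, `n f n ≤ 2 ∑_{n/2 ≤ i < n} f i`, a difference of partial sums.
theorem Summable.tendsto_natCast_mul_atTop_zero {f : ℕ → ℝ} (hf : Summable f)
    (hf0 : ∀ n, 0 ≤ f n) (hanti : ∀ᶠ n in atTop, f (n + 1) ≤ f n) :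
    Tendsto (fun n : ℕ => (n : ℝ) * f n) atTop (𝓝 0) := by
  obtain ⟨N, hN⟩ := eventually_atTop.1 hanti
  have hS := hf.hasSum.tendsto_sum_nat
  have hblock : Tendsto (fun n => ∑ i ∈ range n, f i - ∑ i ∈ range (n / 2), f i) atTop (𝓝 0) := by
    simpa using hS.sub (hS.comp (Nat.tendsto_div_const_atTop two_ne_zero))
  refine tendsto_of_tendsto_of_tendsto_of_le_of_le' tendsto_const_nhds
    (by simpa using hblock.const_mul 2) (Eventually.of_forall fun n => by have := hf0 n; positivity) ?_
  filter_upwards [eventually_ge_atTop (2 * N)] with n hn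
  have hle : ∀ i ∈ Ico (n / 2) n, f n ≤ f i := fun i hi =>
    antitoneOn_nat_Ici_of_succ_le hN (by simp at hi ⊢; omega) (by simp; omega) (mem_Ico.1 hi).2.le
  have hcard : (n : ℝ) ≤ 2 * ((n - n / 2 : ℕ) : ℝ) := by
    exact_mod_cast (by omega : n ≤ 2 * (n - n / 2))
  calc (n : ℝ) * f n ≤ 2 * (((n - n / 2 : ℕ) : ℝ) * f n) := by
        nlinarith [hf0 n]
    _ ≤ 2 * ∑ i ∈ Ico (n / 2) n, f i := by
        gcongr
        simpa using sum_le_sum hle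
    _ = 2 * (∑ i ∈ range n, f i - ∑ i ∈ range (n / 2), f i) := by
        rw [sum_Ico_eq_sub _ (Nat.div_le_self n 2)]

section
variable {t h : ℝ}

lemma prod_range_add_mul_pos {a : ℝ} (ha : 0 < a) (hh : 0 ≤ h) (n : ℕ) :
    0 < ∏ i ∈ range n, (a + i * h) :=
  prod_pos fun i _ => by positivity

lemma hBernstein_nonneg (hh : 0 ≤ h) (ht0 : 0 ≤ t) (ht1 : t ≤ 1) (n k : ℕ) :
    0 ≤ hBernstein n k t h := by
  unfold hBernstein
  have hA : 0 ≤ ∏ i ∈ range k, (t + i * h) := prod_nonneg fun i _ => by positivity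
  have hB : 0 ≤ ∏ i ∈ range (n - k), (1 - t + i * h) :=
    prod_nonneg fun i _ => add_nonneg (sub_nonneg.2 ht1) (by positivity)
  have hP := prod_range_add_mul_pos one_pos hh n
  positivity

lemma hBernstein_succ_mul (hh : 0 ≤ h) {n k : ℕ} (hkn : k ≤ n) :
    ((n : ℝ) + 1 - k) * (1 + n * h) * hBernstein (n + 1) k t h
      = (n + 1) * (1 - t + (n - k) * h) * hBernstein n k t h := by
  have hchoose : ((n + 1).choose k : ℝ) * ((n : ℝ) + 1 - k) = n.choose k * (n + 1) := by
    have := congrArg (Nat.cast (R := ℝ)) (Nat.choose_mul_succ_eq n k)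
    push_cast [Nat.cast_sub (by omega : k ≤ n + 1)] at this
    linarith
  have hP := (prod_range_add_mul_pos one_pos hh n).ne'
  have hn : (1 : ℝ) + n * h ≠ 0 := by positivity
  unfold hBernstein
  rw [Nat.sub_add_comm hkn, prod_range_succ, prod_range_succ, Nat.cast_sub hkn]
  set A := ∏ i ∈ range k, (t + i * h)
  set B := ∏ i ∈ range (n - k), (1 - t + i * h)
  field_simp
  linear_combination A * B * (1 - t + (n - k) * h) * hchoose

lemma hBernstein_succ_succ_mul (hh : 0 ≤ h) (n k : ℕ) :
    ((k : ℝ) + 1) * (1 + n * h) * hBernstein (n + 1) (k + 1) t h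
      = (n + 1) * (t + k * h) * hBernstein n k t h := by
  have hchoose : ((n + 1).choose (k + 1) : ℝ) * ((k : ℝ) + 1) = (n + 1) * n.choose k := by
    exact_mod_cast (Nat.add_one_mul_choose_eq n k).symm
  have hP := (prod_range_add_mul_pos one_pos hh n).ne'
  have hn : (1 : ℝ) + n * h ≠ 0 := by positivity
  unfold hBernstein
  rw [Nat.add_sub_add_right, prod_range_succ, prod_range_succ]
  set A := ∏ i ∈ range k, (t + i * h)
  set B := ∏ i ∈ range (n - k), (1 - t + i * h)
  field_simp
  linear_combination A * B * (t + k * h) * hchoose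

lemma hBernstein_of_lt {n k : ℕ} (hnk : n < k) : hBernstein n k t h = 0 := by
  simp [hBernstein, Nat.choose_eq_zero_of_lt hnk]

-- Conditioning on the colour of the last of `n + 1` draws.
lemma hBernstein_pascal (hh : 0 ≤ h) (n k : ℕ) :
    ((n : ℝ) + 1 - k) * hBernstein (n + 1) k t h + ((k : ℝ) + 1) * hBernstein (n + 1) (k + 1) t h
      = (n + 1) * hBernstein n k t h := by
  rcases le_or_gt k n with hkn | hnk
  · have hn : (1 : ℝ) + n * h ≠ 0 := by positivity
    refine mul_left_cancel₀ hn ?_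
    linear_combination hBernstein_succ_mul (t := t) hh hkn + hBernstein_succ_succ_mul (t := t) hh n k
  · rw [hBernstein_of_lt hnk, hBernstein_of_lt (Nat.succ_lt_succ hnk)]
    obtain rfl | hlt := (Nat.succ_le_of_lt hnk).eq_or_lt
    · push_cast; ring
    · rw [hBernstein_of_lt hlt]; ring

lemma hBernstein_succ_le (hh : 0 ≤ h) (ht0 : 0 ≤ t) (ht1 : t < 1) {n k : ℕ}
    (hk : (k : ℝ) ≤ t * (n + 1)) : hBernstein (n + 1) k t h ≤ hBernstein n k t h := by
  have hkn : k ≤ n := by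
    have : (k : ℝ) < n + 1 := by nlinarith
    exact Nat.lt_succ_iff.1 (by exact_mod_cast this)
  have hpos : 0 < ((n : ℝ) + 1 - k) * (1 + n * h) := by
    have : (k : ℝ) ≤ n := by exact_mod_cast hkn
    have : (0 : ℝ) ≤ n * h := by positivity
    nlinarith
  refine le_of_mul_le_mul_left ?_ hpos
  rw [hBernstein_succ_mul hh hkn]
  refine mul_le_mul_of_nonneg_right ?_ (hBernstein_nonneg hh ht0 ht1.le n k)
  nlinarith [mul_nonneg (Nat.cast_nonneg (α := ℝ) k) hh]

lemma eventually_hBernstein_succ_le (hh : 0 ≤ h) (ht0 : 0 < t) (ht1 : t < 1) (k : ℕ) :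
    ∀ᶠ n in atTop, hBernstein (n + 1) k t h ≤ hBernstein n k t h := by
  filter_upwards [eventually_ge_atTop ⌈k / t⌉₊] with n hn
  refine hBernstein_succ_le hh ht0.le ht1 ?_
  have := (div_le_iff₀ ht0).1 (Nat.ceil_le.1 hn)
  nlinarith

lemma mul_sum_range_hBernstein_sub (hh : 0 ≤ h) (k N : ℕ) :
    ((k : ℝ) + 1) * ∑ n ∈ range (N + 1), (hBernstein n k t h - hBernstein n (k + 1) t h)
      = (N + 1) * hBernstein N k t h := by
  induction N with
  | zero => cases k <;> simp [hBernstein]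
  | succ N ih =>
    rw [sum_range_succ, mul_add, ih]
    push_cast
    linear_combination -hBernstein_pascal (t := t) hh N k

lemma sub_mul_sum_range_hBernstein_zero (hh : 0 ≤ h) (N : ℕ) :
    (t - h) * ∑ n ∈ range N, hBernstein n 0 t h = 1 - h - (1 - h + N * h) * hBernstein N 0 t h := by
  induction N with
  | zero => simp [hBernstein]
  | succ N ih =>
    have hstep : (1 + N * h) * hBernstein (N + 1) 0 t h = (1 - t + N * h) * hBernstein N 0 t h := by
      refine mul_left_cancel₀ (Nat.cast_add_one_ne_zero N) ?_
      simpa [mul_assoc] using hBernstein_succ_mul (t := t) hh (Nat.zero_le N)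
    rw [sum_range_succ, mul_add, ih]
    push_cast
    linear_combination hstep

theorem hasSum_hBernstein_zero (hh : 0 < h) (hht : h < t) (ht : t < 1) :
    HasSum (fun n => hBernstein n 0 t h) ((1 - h) / (t - h)) := by
  have hth : 0 < t - h := sub_pos.2 hht
  have hB (n : ℕ) : 0 ≤ hBernstein n 0 t h := hBernstein_nonneg hh.le (by linarith) ht.le n 0
  have htel := sub_mul_sum_range_hBernstein_zero (t := t) hh.le
  have hrem_nonneg (N : ℕ) : 0 ≤ (1 - h + N * h) * hBernstein N 0 t h :=
    mul_nonneg (by nlinarith [Nat.cast_nonneg (α := ℝ) N]) (hB N)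
  have hsum : Summable fun n => hBernstein n 0 t h :=
    summable_of_sum_range_le (c := (1 - h) / (t - h)) hB fun N => by
      rw [le_div_iff₀ hth, mul_comm]; linarith [htel N, hrem_nonneg N]
  have hrem : Tendsto (fun N : ℕ => (1 - h + N * h) * hBernstein N 0 t h) atTop (𝓝 0) := by
    have := (hsum.tendsto_atTop_zero.const_mul (1 - h)).add
      ((hsum.tendsto_natCast_mul_atTop_zero hB
        (eventually_hBernstein_succ_le hh.le (hh.trans hht) ht 0)).const_mul h)
    rw [mul_zero, mul_zero, add_zero] at this
    exact this.congr fun N => by ring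
  rw [hasSum_iff_tendsto_nat_of_nonneg hB]
  have := (tendsto_const_nhds (x := 1 - h)).sub hrem |>.div_const (t - h)
  rw [sub_zero] at this
  refine this.congr fun N => ?_
  rw [← htel N]
  field_simp

theorem HasSum.hBernstein_succ (hh : 0 ≤ h) (ht0 : 0 < t) (ht1 : t < 1) {k : ℕ} {L : ℝ}
    (hk : HasSum (fun n => hBernstein n k t h) L) :
    HasSum (fun n => hBernstein n (k + 1) t h) L := by
  have hB := hBernstein_nonneg hh ht0.le ht1.le
  have hrem : Tendsto (fun N : ℕ => ((N : ℝ) + 1) * hBernstein N k t h) atTop (𝓝 0) := by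
    have := (hk.summable.tendsto_natCast_mul_atTop_zero (hB · k)
      (eventually_hBernstein_succ_le hh ht0 ht1 k)).add hk.summable.tendsto_atTop_zero
    rw [add_zero] at this
    exact this.congr fun N => by ring
  rw [hasSum_iff_tendsto_nat_of_nonneg (hB · (k + 1)), ← tendsto_add_atTop_iff_nat 1]
  have := ((tendsto_add_atTop_iff_nat 1).2 hk.tendsto_sum_nat).sub (hrem.div_const ((k : ℝ) + 1))
  rw [zero_div, sub_zero] at this
  refine this.congr fun N => ?_
  have htel := mul_sum_range_hBernstein_sub (t := t) hh k N
  rw [sum_sub_distrib] at htel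
  field_simp
  linear_combination htel

end

/-- For `0 < h < t < 1` and every `k`, `∑_{n=0}^∞ B_k^n(t;h) = (1-h)/(t-h)`. -/
theorem hBernstein_column_sum (t h : ℝ) (hh : 0 < h) (hht : h < t) (ht : t < 1) (k : ℕ) :
    HasSum (fun n : ℕ => hBernstein n k t h) ((1 - h) / (t - h)) := by
  induction k with
  | zero => exact hasSum_hBernstein_zero hh hht ht
  | succ k ih => exact ih.hBernstein_succ hh.le (hh.trans hht) ht
end

section
/- For 0 < h < t < 1, with a = t/h and b = (1-t)/h, the h-Bernstein polynomial satisfies the beta-binomial mixture representation B_k^n(t;h) = ∫_0^1 C(n,k) p^k (1-p)^{n-k} · p^{a-1}(1-p)^{b-1} / B(a,b) dp, where B(a,b) is the Beta function. -/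
/-! With `a = t / h` and `b = (1 - t) / h`, so that `a + b = 1 / h`, the three products in
`B_k^n(t;h)` are `h`-scaled rising factorials: `∏ (t + i h) = h ^ k (a)_k`, and likewise for
`b` and `a + b`. Against the `Beta(a, b)` density, the binomial weight `p ^ k (1 - p) ^ m`
integrates to `B(a + k, b + m) / B(a, b) = (a)_k (b)_m / (a + b)_(k + m)`, from
`Γ(x + n) = Γ(x) (x)_n`; the powers of `h` cancel. -/

open Finset Real intervalIntegral ProbabilityTheory

lemma Real.Gamma_add_nat_eq_mul_prod {x : ℝ} (hx : ∀ i : ℕ, x + i ≠ 0) (n : ℕ) :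
    Gamma (x + n) = Gamma x * ∏ i ∈ range n, (x + i) := by
  induction n with
  | zero => simp
  | succ n ih =>
    rw [Nat.cast_succ, ← add_assoc, Gamma_add_one (hx n), ih, prod_range_succ]
    ring

lemma ProbabilityTheory.beta_add_nat_add_nat {a b : ℝ} (ha : 0 < a) (hb : 0 < b) (k m : ℕ) :
    beta (a + k) (b + m) = beta a b * ((∏ i ∈ range k, (a + i)) * (∏ i ∈ range m, (b + i)) /
      ∏ i ∈ range (k + m), (a + b + i)) := by
  have hpos {x : ℝ} (hx : 0 < x) (i : ℕ) : x + i ≠ 0 := by positivity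
  have hab : a + k + (b + m) = a + b + ((k + m : ℕ) : ℝ) := by push_cast; ring
  have hprod : ∏ i ∈ range (k + m), (a + b + i) ≠ 0 :=
    prod_ne_zero_iff.mpr fun i _ => hpos (add_pos ha hb) i
  have hΓ := (Gamma_pos_of_pos (add_pos ha hb)).ne'
  rw [beta, beta, hab, Gamma_add_nat_eq_mul_prod (hpos ha), Gamma_add_nat_eq_mul_prod (hpos hb),
    Gamma_add_nat_eq_mul_prod (hpos (add_pos ha hb))]
  field_simp

lemma Real.pow_mul_rpow_sub_one {x : ℝ} (hx : 0 ≤ x) {c : ℝ} (hc : 0 < c) (k : ℕ) :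
    x ^ k * x ^ (c - 1) = x ^ (c + k - 1) := by
  rcases k.eq_zero_or_pos with rfl | hk
  · simp
  · have hk' : (1 : ℝ) ≤ k := by exact_mod_cast hk
    rw [← rpow_natCast, ← rpow_add' hx (by linarith)]
    ring_nf

lemma ProbabilityTheory.integral_rpow_mul_one_sub_rpow_eq_beta {a b : ℝ} (ha : 0 < a)
    (hb : 0 < b) :
    ∫ x in (0 : ℝ)..1, x ^ (a - 1) * (1 - x) ^ (b - 1) = beta a b := by
  have hcpow : Set.EqOn (fun x : ℝ => (x : ℂ) ^ ((a : ℂ) - 1) * (1 - (x : ℂ)) ^ ((b : ℂ) - 1))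
      (fun x => ((x ^ (a - 1) * (1 - x) ^ (b - 1) : ℝ) : ℂ)) (Set.uIcc 0 1) := by
    intro x hx
    rw [Set.uIcc_of_le zero_le_one] at hx
    push_cast [Complex.ofReal_cpow hx.1, Complex.ofReal_cpow (sub_nonneg.mpr hx.2)]
    rfl
  rw [beta_eq_betaIntegralReal a b ha hb, Complex.betaIntegral, integral_congr hcpow,
    intervalIntegral.integral_ofReal, Complex.ofReal_re]

lemma ProbabilityTheory.integral_const_mul_pow_mul_one_sub_pow_mul_eq_beta {a b : ℝ}
    (ha : 0 < a) (hb : 0 < b) (c : ℝ) (k m : ℕ) :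
    ∫ p in (0 : ℝ)..1, c * p ^ k * (1 - p) ^ m * (p ^ (a - 1) * (1 - p) ^ (b - 1)) =
      c * beta (a + k) (b + m) := by
  rw [← integral_rpow_mul_one_sub_rpow_eq_beta (by positivity) (by positivity),
    ← integral_const_mul]
  refine integral_congr fun p hp => ?_
  rw [Set.uIcc_of_le zero_le_one] at hp
  rw [← pow_mul_rpow_sub_one hp.1 ha, ← pow_mul_rpow_sub_one (sub_nonneg.mpr hp.2) hb]
  ring

lemma Finset.prod_range_add_natCast_mul {K : Type*} [Field K] (c : K) {h : K} (hh : h ≠ 0)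
    (n : ℕ) : ∏ i ∈ range n, (c + i * h) = h ^ n * ∏ i ∈ range n, (c / h + i) := by
  calc ∏ i ∈ range n, (c + i * h) = ∏ i ∈ range n, h * (c / h + i) :=
        prod_congr rfl fun i _ => by field_simp
    _ = h ^ n * ∏ i ∈ range n, (c / h + i) := by rw [prod_mul_distrib, prod_const, card_range]

lemma hBernstein_eq_prod_div_prod {t h : ℝ} (hh : h ≠ 0) (k m : ℕ) :
    hBernstein (k + m) k t h = ((k + m).choose k : ℝ) *
      ((∏ i ∈ range k, (t / h + i)) * (∏ i ∈ range m, ((1 - t) / h + i)) /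
        ∏ i ∈ range (k + m), (t / h + (1 - t) / h + i)) := by
  have hsum : t / h + (1 - t) / h = 1 / h := by field_simp; ring
  rw [hBernstein, Nat.add_sub_cancel_left, hsum, prod_range_add_natCast_mul t hh,
    prod_range_add_natCast_mul (1 - t) hh, prod_range_add_natCast_mul 1 hh, pow_add]
  field_simp

/-- For `0 < h < t < 1`, with `a = t/h` and `b = (1-t)/h`, the h-Bernstein polynomial is a
beta-binomial mixture:
`B_k^n(t;h) = ∫_0^1 C(n,k) p^k (1-p)^{n-k} · p^{a-1}(1-p)^{b-1} / B(a,b) dp`. -/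
theorem hBernstein_beta_binomial (t h : ℝ) (hh : 0 < h) (hht : h < t) (ht : t < 1)
    (n k : ℕ) (a b : ℝ) (ha : a = t / h) (hb : b = (1 - t) / h) :
    hBernstein n k t h =
      ∫ p in (0 : ℝ)..1,
        (n.choose k : ℝ) * p ^ k * (1 - p) ^ (n - k) *
          (p ^ (a - 1) * (1 - p) ^ (b - 1)) /
          (∫ x in (0 : ℝ)..1, x ^ (a - 1) * (1 - x) ^ (b - 1)) := by
  rcases le_or_gt k n with hk | hk
  · obtain ⟨m, rfl⟩ := Nat.exists_eq_add_of_le hk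
    have ha0 : 0 < a := ha ▸ div_pos (hh.trans hht) hh
    have hb0 : 0 < b := hb ▸ div_pos (sub_pos.mpr ht) hh
    rw [Nat.add_sub_cancel_left, intervalIntegral.integral_div,
      integral_const_mul_pow_mul_one_sub_pow_mul_eq_beta ha0 hb0,
      integral_rpow_mul_one_sub_rpow_eq_beta ha0 hb0,
      beta_add_nat_add_nat ha0 hb0, hBernstein_eq_prod_div_prod hh.ne', ← ha, ← hb]
    field_simp [(beta_pos ha0 hb0).ne']
  · simp [hBernstein, Nat.choose_eq_zero_of_lt hk]
end

section
/- For 0 < h < t < 1 with a = t/h, b = (1-t)/h, and every nonnegative integer k: ∑_{n=0}^∞ (-1)^n B_k^n(t;h) = (-1)^k ∫_0^1 x^{a+k-1}(1-x)^{b-1}/((2-x)^{k+1} B(a,b)) dx. -/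
/-!
With `a = t/h` and `b = (1-t)/h` the h-Bernstein weight is a beta-binomial probability,
`B_k^n(t;h) = C(n,k) B(a+k, b+n-k) / B(a,b)`, so `(-1)^n B_k^n(t;h)` is the integral over `(0,1)`
of `(-1)^n C(n,k) (1-x)^(n-k)` against the density `x^(a+k-1) (1-x)^(b-1) / B(a,b)`.
For `0 < x < 1` these coefficients sum to `(-1)^k / (2-x)^(k+1)`, and summation and integration
may be exchanged by dominated convergence: the series of absolute values sums to
`x^(a-2) (1-x)^(b-1) / B(a,b)`, which is integrable exactly because `a > 1`, i.e. `h < t`.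
-/

open MeasureTheory ProbabilityTheory Set Real
open scoped Interval

lemma cpow_mul_one_sub_cpow_eq_ofReal {x : ℝ} (hx : x ∈ Icc (0 : ℝ) 1) (p q : ℝ) :
    (x : ℂ) ^ ((p : ℂ) - 1) * (1 - (x : ℂ)) ^ ((q : ℂ) - 1) =
      ((x ^ (p - 1) * (1 - x) ^ (q - 1) : ℝ) : ℂ) := by
  rw [Complex.ofReal_mul, Complex.ofReal_cpow hx.1, Complex.ofReal_cpow (sub_nonneg.2 hx.2)]
  push_cast
  rfl

lemma intervalIntegrable_rpow_mul_one_sub_rpow {p q : ℝ} (hp : 0 < p) (hq : 0 < q) :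
    IntervalIntegrable (fun x : ℝ => x ^ (p - 1) * (1 - x) ^ (q - 1)) volume 0 1 := by
  have hc := Complex.betaIntegral_convergent (u := p) (v := q) (by simpa) (by simpa)
  refine IntervalIntegrable.congr_uIoo ⟨hc.1.re, hc.2.re⟩ fun x hx => ?_
  rw [uIoo_of_le zero_le_one] at hx
  rw [cpow_mul_one_sub_cpow_eq_ofReal (Ioo_subset_Icc_self hx)]
  exact Complex.ofReal_re _

lemma integral_rpow_mul_one_sub_rpow {p q : ℝ} (hp : 0 < p) (hq : 0 < q) :
    ∫ x in (0 : ℝ)..1, x ^ (p - 1) * (1 - x) ^ (q - 1) = beta p q := by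
  have h : Complex.betaIntegral p q =
      ((∫ x in (0 : ℝ)..1, x ^ (p - 1) * (1 - x) ^ (q - 1) : ℝ) : ℂ) := by
    rw [Complex.betaIntegral, ← intervalIntegral.integral_ofReal]
    refine intervalIntegral.integral_congr fun x hx => ?_
    rw [uIcc_of_le zero_le_one] at hx
    exact cpow_mul_one_sub_cpow_eq_ofReal hx p q
  rw [beta_eq_betaIntegralReal p q hp hq, h, Complex.ofReal_re]

lemma Real.Gamma_add_natCast_eq_mul_prod {u : ℝ} (hu : 0 < u) (k : ℕ) :
    Gamma (u + k) = Gamma u * ∏ i ∈ Finset.range k, (u + i) := by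
  induction k with
  | zero => simp
  | succ k ih =>
    rw [Nat.cast_succ, ← add_assoc, Gamma_add_one (by positivity), ih, Finset.prod_range_succ]
    ring

lemma ProbabilityTheory.beta_add_natCast_add_natCast {p q : ℝ} (hp : 0 < p) (hq : 0 < q)
    (k m : ℕ) :
    beta (p + k) (q + m) =
      (∏ i ∈ Finset.range k, (p + i)) * (∏ i ∈ Finset.range m, (q + i)) /
        (∏ i ∈ Finset.range (k + m), (p + q + i)) * beta p q := by
  have hsum : p + k + (q + m) = p + q + ((k + m : ℕ) : ℝ) := by push_cast; ring
  have hprod : ∏ i ∈ Finset.range (k + m), (p + q + i) ≠ 0 :=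
    Finset.prod_ne_zero_iff.2 fun i _ => by positivity
  have hΓ : Gamma (p + q) ≠ 0 := (Gamma_pos_of_pos (by positivity)).ne'
  simp only [beta]
  rw [hsum, Gamma_add_natCast_eq_mul_prod hp, Gamma_add_natCast_eq_mul_prod hq,
    Gamma_add_natCast_eq_mul_prod (by positivity)]
  field_simp

lemma ae_uIoc_of_forall_Ioo {a b : ℝ} (hab : a ≤ b) {P : ℝ → Prop}
    (h : ∀ x ∈ Ioo a b, P x) : ∀ᵐ x, x ∈ Ι a b → P x := by
  filter_upwards [Measure.ae_ne volume b] with x hxb hx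
  rw [uIoc_of_le hab] at hx
  exact h x ⟨hx.1, hx.2.lt_of_ne hxb⟩

lemma hasSum_choose_mul_pow_sub {𝕜 : Type*} [NormedDivisionRing 𝕜] [HasSummableGeomSeries 𝕜]
    (k : ℕ) {r : 𝕜} (hr : ‖r‖ < 1) :
    HasSum (fun n => (n.choose k : 𝕜) * r ^ (n - k)) (1 / (1 - r) ^ (k + 1)) := by
  have hzero : ∀ n ∈ Finset.range k, (n.choose k : 𝕜) * r ^ (n - k) = 0 := fun n hn => by
    rw [Nat.choose_eq_zero_of_lt (Finset.mem_range.1 hn), Nat.cast_zero, zero_mul]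
  refine (hasSum_nat_add_iff' k).1 ?_
  simpa [Finset.sum_eq_zero hzero] using hasSum_choose_mul_geometric_of_norm_lt_one k hr

lemma hasSum_neg_one_pow_mul_choose_mul_pow_sub {𝕜 : Type*} [NormedField 𝕜]
    [HasSummableGeomSeries 𝕜] (k : ℕ) {r : 𝕜} (hr : ‖r‖ < 1) :
    HasSum (fun n => (-1) ^ n * (n.choose k : 𝕜) * r ^ (n - k))
      ((-1) ^ k / (1 + r) ^ (k + 1)) := by
  have hterm : ∀ n, (-1) ^ k * ((n.choose k : 𝕜) * (-r) ^ (n - k)) =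
      (-1) ^ n * (n.choose k : 𝕜) * r ^ (n - k) := fun n => by
    rcases lt_or_ge n k with hnk | hkn
    · simp [Nat.choose_eq_zero_of_lt hnk]
    · obtain ⟨m, rfl⟩ := Nat.exists_eq_add_of_le hkn
      rw [Nat.add_sub_cancel_left, neg_pow, pow_add]
      ring
  have h := (hasSum_choose_mul_pow_sub k (r := -r) (by rwa [norm_neg])).mul_left ((-1) ^ k)
  simpa only [hterm, sub_neg_eq_add, mul_one_div] using h

lemma prod_range_add_mul_eq_pow_mul_prod {c h : ℝ} (hh : h ≠ 0) (n : ℕ) :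
    ∏ i ∈ Finset.range n, (c + i * h) = h ^ n * ∏ i ∈ Finset.range n, (c / h + i) := by
  rw [Finset.pow_eq_prod_const, ← Finset.prod_mul_distrib]
  exact Finset.prod_congr rfl fun i _ => by field_simp

lemma hBernstein_eq_choose_mul_beta_div {t h : ℝ} (hh : 0 < h) (ht₀ : 0 < t) (ht₁ : t < 1)
    (n k : ℕ) :
    hBernstein n k t h =
      n.choose k * beta (t / h + k) ((1 - t) / h + (n - k : ℕ)) / beta (t / h) ((1 - t) / h) := by
  rcases lt_or_ge n k with hnk | hkn
  · simp [hBernstein, Nat.choose_eq_zero_of_lt hnk]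
  have ha : 0 < t / h := by positivity
  have hb : 0 < (1 - t) / h := div_pos (by linarith) hh
  have hab : t / h + (1 - t) / h = 1 / h := by field_simp; ring
  have hB := (beta_pos ha hb).ne'
  obtain ⟨m, rfl⟩ := Nat.exists_eq_add_of_le hkn
  have hprod : ∏ i ∈ Finset.range (k + m), (1 / h + i) ≠ 0 :=
    Finset.prod_ne_zero_iff.2 fun i _ => by positivity
  rw [hBernstein, Nat.add_sub_cancel_left, prod_range_add_mul_eq_pow_mul_prod hh.ne',
    prod_range_add_mul_eq_pow_mul_prod hh.ne', prod_range_add_mul_eq_pow_mul_prod hh.ne',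
    beta_add_natCast_add_natCast ha hb, hab, pow_add]
  field_simp

lemma hasSum_neg_one_pow_mul_choose_mul_integral {a b : ℝ} (ha : 1 < a) (hb : 0 < b) (k : ℕ) :
    HasSum (fun n : ℕ => (-1) ^ n * n.choose k *
        ∫ x in (0 : ℝ)..1, x ^ (a + k - 1) * (1 - x) ^ (b + (n - k : ℕ) - 1))
      ((-1) ^ k *
        ∫ x in (0 : ℝ)..1, x ^ (a + k - 1) * (1 - x) ^ (b - 1) / (2 - x) ^ (k + 1)) := by
  set g : ℝ → ℝ := fun x => x ^ (a + k - 1) * (1 - x) ^ (b - 1) with hg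
  have hsplit : ∀ x ∈ Ioo (0 : ℝ) 1, ∀ m : ℕ,
      x ^ (a + k - 1) * (1 - x) ^ (b + m - 1) = (1 - x) ^ m * g x := fun x hx m => by
    rw [show b + m - 1 = b - 1 + m by ring, rpow_add_natCast (by linarith [hx.2])]
    ring
  have hg_nonneg : ∀ x ∈ Ioo (0 : ℝ) 1, 0 ≤ g x := fun x hx =>
    mul_nonneg (rpow_nonneg hx.1.le _) (rpow_nonneg (by linarith [hx.2]) _)
  have hr : ∀ x ∈ Ioo (0 : ℝ) 1, ‖1 - x‖ < 1 := fun x hx => by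
    rw [norm_eq_abs, abs_lt]; constructor <;> linarith [hx.1, hx.2]
  simp_rw [← intervalIntegral.integral_const_mul]
  refine intervalIntegral.hasSum_integral_of_dominated_convergence
    (fun n x => n.choose k * (1 - x) ^ (n - k) * g x)
    (fun n => (by fun_prop : Measurable _).aestronglyMeasurable) (fun n => ?_) ?_ ?_ ?_
  · refine ae_uIoc_of_forall_Ioo zero_le_one fun x hx => le_of_eq ?_
    rw [hsplit x hx, norm_mul, norm_mul, norm_mul, norm_pow, norm_neg, norm_one, one_pow, one_mul,
      Real.norm_natCast, norm_pow, norm_of_nonneg (hg_nonneg x hx),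
      norm_of_nonneg (by linarith [hx.2] : (0 : ℝ) ≤ 1 - x), mul_assoc]
  · exact ae_uIoc_of_forall_Ioo zero_le_one fun x hx =>
      ((hasSum_choose_mul_pow_sub k (hr x hx)).mul_right (g x)).summable
  · refine (intervalIntegrable_rpow_mul_one_sub_rpow (p := a - 1) (by linarith) hb).congr_uIoo
      fun x hx => ?_
    rw [uIoo_of_le zero_le_one] at hx
    rw [((hasSum_choose_mul_pow_sub k (hr x hx)).mul_right (g x)).tsum_eq, sub_sub_cancel]
    simp only [hg]
    have hx₀ : x ≠ 0 := hx.1.ne'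
    rw [show a + k - 1 = a - 1 - 1 + (k + 1 : ℕ) by push_cast; ring, rpow_add_natCast hx₀]
    field_simp
  · refine ae_uIoc_of_forall_Ioo zero_le_one fun x hx => ?_
    have h := (hasSum_neg_one_pow_mul_choose_mul_pow_sub k (hr x hx)).mul_right (g x)
    rw [show 1 + (1 - x) = 2 - x by ring] at h
    simp only [hsplit x hx, ← mul_assoc]
    rwa [show (-1) ^ k * (x ^ (a + k - 1) * (1 - x) ^ (b - 1) / (2 - x) ^ (k + 1)) =
      (-1) ^ k / (2 - x) ^ (k + 1) * g x by rw [hg]; ring]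

/-- For `0 < h < t < 1` with `a = t/h`, `b = (1-t)/h`, and every `k`:
`∑_{n=0}^∞ (-1)^n B_k^n(t;h) = (-1)^k ∫_0^1 x^{a+k-1}(1-x)^{b-1}/((2-x)^{k+1} B(a,b)) dx`. -/
theorem hBernstein_alternating_sum (t h : ℝ) (hh : 0 < h) (hht : h < t) (ht : t < 1)
    (k : ℕ) (a b : ℝ) (ha : a = t / h) (hb : b = (1 - t) / h) :
    HasSum (fun n : ℕ => (-1 : ℝ) ^ n * hBernstein n k t h)
      ((-1 : ℝ) ^ k *
        ∫ x in (0 : ℝ)..1,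
          x ^ (a + k - 1) * (1 - x) ^ (b - 1) /
            ((2 - x) ^ (k + 1) * ∫ y in (0 : ℝ)..1, y ^ (a - 1) * (1 - y) ^ (b - 1))) := by
  have ha₁ : 1 < a := by rw [ha, lt_div_iff₀ hh]; linarith
  have hb₀ : 0 < b := by rw [hb]; exact div_pos (by linarith) hh
  have hsum := (hasSum_neg_one_pow_mul_choose_mul_integral ha₁ hb₀ k).div_const (beta a b)
  have hterm : ∀ n : ℕ, (-1) ^ n * (n.choose k : ℝ) *
      (∫ x in (0 : ℝ)..1, x ^ (a + k - 1) * (1 - x) ^ (b + (n - k : ℕ) - 1)) / beta a b =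
        (-1) ^ n * hBernstein n k t h := fun n => by
    rw [hBernstein_eq_choose_mul_beta_div hh (hh.trans hht) ht, ← ha, ← hb,
      integral_rpow_mul_one_sub_rpow (by positivity) (by positivity)]
    ring
  rw [mul_div_assoc, ← intervalIntegral.integral_div] at hsum
  rw [integral_rpow_mul_one_sub_rpow (by linarith) hb₀]
  simpa only [hterm, div_div] using hsum
end

section
/- Let c_0, ..., c_{m-1} be real numbers with ∑ c_i = 0, extended periodically by c_k = c_{k mod m}. Then lim_{k→∞} ∑_{n=0}^∞ c_n (1/2^n) C(n,k) = 0. -/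
open Filter Finset

private lemma id1 (n k : ℕ) : (n + 1) * n.choose k = (n+1).choose k * (n + 1 - k) := by
  rw [Nat.add_one_mul_choose_eq, Nat.choose_succ_right_eq]

private lemma sign_le {n k : ℕ} (h : n + 1 ≤ 2 * k) : 2 * n.choose k ≤ (n+1).choose k := by
  have h1 := id1 n k
  have h2 : 2 * (n + 1 - k) ≤ n + 1 := by omega
  have h3 : 2 * n.choose k * (n+1) = (n+1).choose k * (2 * (n + 1 - k)) := by
    calc 2 * n.choose k * (n+1) = 2 * ((n+1) * n.choose k) := by ring
      _ = 2 * ((n+1).choose k * (n + 1 - k)) := by rw [h1]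
      _ = (n+1).choose k * (2 * (n + 1 - k)) := by ring
  have h4 : 2 * n.choose k * (n+1) ≤ (n+1).choose k * (n+1) :=
    h3 ▸ Nat.mul_le_mul_left _ h2
  exact Nat.le_of_mul_le_mul_right h4 (by omega)

private lemma sign_ge {n k : ℕ} (h : 2 * k ≤ n + 1) : (n+1).choose k ≤ 2 * n.choose k := by
  have h1 := id1 n k
  have h2 : n + 1 ≤ 2 * (n + 1 - k) := by omega
  have h3 : 2 * n.choose k * (n+1) = (n+1).choose k * (2 * (n + 1 - k)) := by
    calc 2 * n.choose k * (n+1) = 2 * ((n+1) * n.choose k) := by ring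
      _ = 2 * ((n+1).choose k * (n + 1 - k)) := by rw [h1]
      _ = (n+1).choose k * (2 * (n + 1 - k)) := by ring
  have h4 : (n+1).choose k * (n+1) ≤ 2 * n.choose k * (n+1) :=
    h3 ▸ Nat.mul_le_mul_left _ h2
  exact Nat.le_of_mul_le_mul_right h4 (by omega)

private lemma central_sq_le : ∀ k : ℕ, (((2*k).choose k : ℝ))^2 * (k+1) ≤ 16^k := by
  intro k; induction k with
  | zero => norm_num
  | succ k ih =>
    have key := Nat.succ_mul_centralBinom_succ k
    rw [Nat.centralBinom_eq_two_mul_choose, Nat.centralBinom_eq_two_mul_choose] at key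
    have key' : ((k:ℝ)+1) * ((2*(k+1)).choose (k+1) : ℝ)
        = 2*(2*(k:ℝ)+1) * ((2*k).choose k : ℝ) := by exact_mod_cast key
    set a := ((2*k).choose k : ℝ) with ha
    set b := ((2*(k+1)).choose (k+1) : ℝ) with hb
    have hA : (0:ℝ) ≤ a := Nat.cast_nonneg _
    have h16 : (0:ℝ) < 16^k := by positivity
    have h1 : ((k:ℝ)+1)^2 * b^2 = 4*(2*(k:ℝ)+1)^2 * a^2 := by
      linear_combination (((k:ℝ)+1)*b + 2*(2*(k:ℝ)+1)*a) * key'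
    have goal' : b^2 * ((k:ℝ)+1+1) * ((k:ℝ)+1)^2 ≤ 16^(k+1) * ((k:ℝ)+1)^2 := by
      have e1 : b^2 * ((k:ℝ)+1+1) * ((k:ℝ)+1)^2 = 4*(2*(k:ℝ)+1)^2*((k:ℝ)+2) * a^2 := by
        linear_combination ((k:ℝ)+2) * h1
      rw [e1]
      have e2 : 4*(2*(k:ℝ)+1)^2*((k:ℝ)+2) * a^2 ≤ 16*((k:ℝ)+1)^2 * (a^2 * ((k:ℝ)+1)) := by
        nlinarith [sq_nonneg a]
      calc 4*(2*(k:ℝ)+1)^2*((k:ℝ)+2) * a^2 ≤ 16*((k:ℝ)+1)^2 * (a^2 * ((k:ℝ)+1)) := e2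
        _ ≤ 16*((k:ℝ)+1)^2 * 16^k := by
            apply mul_le_mul_of_nonneg_left ih (by positivity)
        _ = 16^(k+1) * ((k:ℝ)+1)^2 := by ring
    have hpos : (0:ℝ) < ((k:ℝ)+1)^2 := by positivity
    push_cast
    nlinarith [goal', hpos]

private noncomputable def qf (k n : ℕ) : ℝ := (n.choose k : ℝ) / 2 ^ n

private noncomputable def ef (k : ℕ) : ℕ → ℝ
  | 0 => 0
  | (n+1) => qf k n

private noncomputable def df (k n : ℕ) : ℝ := qf k n - ef k n

private lemma qf_nonneg (k n : ℕ) : 0 ≤ qf k n := by unfold qf; positivity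

private lemma qf_summable (k : ℕ) : Summable (qf k) := by
  apply Summable.of_nonneg_of_le (qf_nonneg k) (fun n => ?_)
    (summable_pow_mul_geometric_of_norm_lt_one (R := ℝ) k (r := 1/2) (by norm_num))
  unfold qf
  rw [div_le_iff₀ (by positivity)]
  calc (n.choose k : ℝ) ≤ (n:ℝ)^k := by exact_mod_cast Nat.choose_le_pow n k
    _ = (n:ℝ)^k * ((1/2)^n * 2^n) := by
        rw [one_div, inv_pow, inv_mul_cancel₀ (by positivity)]; ring
    _ = (n:ℝ)^k * (1/2)^n * 2^n := by ring

private lemma ef_summable (k : ℕ) : Summable (ef k) := by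
  apply (summable_nat_add_iff 1).mp
  exact (qf_summable k)

private lemma ef_tsum (k : ℕ) : ∑' n, ef k n = ∑' n, qf k n := by
  rw [Summable.tsum_eq_zero_add (ef_summable k)]
  simp [ef]

private lemma df_summable (k : ℕ) : Summable (df k) := (qf_summable k).sub (ef_summable k)

private lemma df_tsum (k : ℕ) : ∑' n, df k n = 0 := by
  unfold df
  rw [Summable.tsum_sub (qf_summable k) (ef_summable k), ef_tsum, sub_self]

private lemma df_telescope (k : ℕ) : ∀ N, ∑ n ∈ range (N+1), df k n = qf k N := by
  intro N; induction N with
  | zero => simp [df, ef]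
  | succ N ih =>
      rw [Finset.sum_range_succ, ih]
      show qf k N + (qf k (N+1) - qf k N) = _
      ring

private lemma qf_mono {k n : ℕ} (h : n + 1 ≤ 2 * k) : qf k n ≤ qf k (n+1) := by
  have hc : 2 * (n.choose k : ℝ) ≤ ((n+1).choose k : ℝ) := by exact_mod_cast sign_le h
  unfold qf
  rw [div_le_div_iff₀ (by positivity) (by positivity), pow_succ]
  nlinarith [pow_pos (by norm_num : (0:ℝ) < 2) n, (show (0:ℝ) ≤ (n.choose k : ℝ) from Nat.cast_nonneg _)]

private lemma qf_anti {k n : ℕ} (h : 2 * k ≤ n + 1) : qf k (n+1) ≤ qf k n := by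
  have hc : ((n+1).choose k : ℝ) ≤ 2 * (n.choose k : ℝ) := by exact_mod_cast sign_ge h
  unfold qf
  rw [div_le_div_iff₀ (by positivity) (by positivity), pow_succ]
  nlinarith [pow_pos (by norm_num : (0:ℝ) < 2) n, (show (0:ℝ) ≤ ((n+1).choose k : ℝ) from Nat.cast_nonneg _)]

private lemma df_nonneg {k n : ℕ} (h : n ≤ 2 * k) : 0 ≤ df k n := by
  cases n with
  | zero => simpa [df, ef] using qf_nonneg k 0
  | succ j =>
      have : qf k j ≤ qf k (j+1) := qf_mono h
      show 0 ≤ qf k (j+1) - qf k j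
      linarith

private lemma df_nonpos {k n : ℕ} (h : 2 * k + 1 ≤ n) : df k n ≤ 0 := by
  obtain ⟨j, rfl⟩ : ∃ j, n = j + 1 := ⟨n - 1, by omega⟩
  have : qf k (j+1) ≤ qf k j := qf_anti (by omega)
  show qf k (j+1) - qf k j ≤ 0
  linarith

private lemma df_abs_tsum (k : ℕ) : ∑' n, |df k n| = 2 * qf k (2*k) := by
  have habs : Summable (fun n => |df k n|) := (df_summable k).abs
  set P : ℕ → ℝ := fun n => max (df k n) 0 with hP
  have hPsum : Summable P := by
    apply Summable.of_nonneg_of_le (fun n => le_max_right _ _) (fun n => ?_) habs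
    exact max_le (le_abs_self _) (abs_nonneg _)
  have hPt : ∑' n, P n = qf k (2*k) := by
    rw [tsum_eq_sum (s := range (2*k+1)) (fun n hn => ?_)]
    · rw [Finset.sum_congr rfl (fun n hn => ?_), df_telescope k (2*k)]
      exact max_eq_left (df_nonneg (by simp at hn; omega))
    · exact max_eq_right (df_nonpos (by simp at hn; omega))
  have habs_eq : ∀ n, |df k n| = 2 * P n - df k n := by
    intro n
    rcases le_or_gt 0 (df k n) with h | h
    · rw [abs_of_nonneg h, hP]; simp only [max_eq_left h]; ring
    · rw [abs_of_neg h, hP]; simp only [max_eq_right h.le]; ring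
  calc ∑' n, |df k n| = ∑' n, (2 * P n - df k n) := by
        exact tsum_congr habs_eq
    _ = 2 * ∑' n, P n - ∑' n, df k n := by
        rw [Summable.tsum_sub (hPsum.mul_left 2) (df_summable k), tsum_mul_left]
    _ = 2 * qf k (2*k) := by rw [hPt, df_tsum]; ring

private lemma central_bound (k : ℕ) : qf k (2*k) ≤ Real.sqrt (1/((k:ℝ)+1)) := by
  have h1 := central_sq_le k
  have h2 : (2:ℝ)^(2*k) = 4^k := by rw [pow_mul]; norm_num
  have h3 : (qf k (2*k))^2 ≤ 1/((k:ℝ)+1) := by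
    unfold qf
    rw [div_pow, h2]
    rw [div_le_div_iff₀ (by positivity) (by positivity)]
    have : ((4:ℝ)^k)^2 = 16^k := by
      rw [← pow_mul, mul_comm, pow_mul]; norm_num
    rw [this]
    linarith [h1]
  calc qf k (2*k) = Real.sqrt ((qf k (2*k))^2) := by
        rw [Real.sqrt_sq (qf_nonneg k (2*k))]
    _ ≤ Real.sqrt (1/((k:ℝ)+1)) := Real.sqrt_le_sqrt h3

/-- For any contrast `c_0, …, c_{m-1}` (summing to zero), extended periodically,
`lim_{k→∞} ∑_{n=0}^∞ c_n (1/2^n) C(n,k) = 0`. -/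
theorem contrast_limit (m : ℕ) (hm : 0 < m) (c : Fin m → ℝ) (hc : ∑ i, c i = 0) :
    Filter.Tendsto
      (fun k : ℕ => ∑' n : ℕ, c ⟨n % m, Nat.mod_lt n hm⟩ * ((n.choose k : ℝ) / 2 ^ n))
      Filter.atTop (nhds 0) := by
  set c' : ℕ → ℝ := fun n => c ⟨n % m, Nat.mod_lt n hm⟩ with hc'
  have hc'per : ∀ a b : ℕ, a % m = b % m → c' a = c' b := by
    intro a b h
    simp only [hc']
    congr 1
    exact Fin.ext (by simpa using h)
  have hci : ∀ i : Fin m, c' i.val = c i := by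
    intro i
    simp only [hc']
    congr 1
    exact Fin.ext (by simp [Nat.mod_eq_of_lt i.isLt])
  -- the discrete antiderivative
  set b : ℕ → ℝ := fun n => -(∑ i ∈ range (n % m), c' i) with hb
  set B : ℝ := ∑ i, |c i| with hB
  have hzero : ∑ i ∈ range m, c' i = 0 := by
    rw [← Fin.sum_univ_eq_sum_range]
    rw [Finset.sum_congr rfl (fun i _ => hci i)]
    exact hc
  have hbB : ∀ n, |b n| ≤ B := by
    intro n
    rw [hb]
    simp only [abs_neg]
    calc |∑ i ∈ range (n % m), c' i| ≤ ∑ i ∈ range (n % m), |c' i| :=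
          Finset.abs_sum_le_sum_abs _ _
      _ ≤ ∑ i ∈ range m, |c' i| := by
          apply Finset.sum_le_sum_of_subset_of_nonneg
          · exact Finset.range_subset_range.mpr (Nat.mod_lt n hm).le
          · intro i _ _; exact abs_nonneg _
      _ = B := by
          rw [hB, ← Fin.sum_univ_eq_sum_range]
          exact Finset.sum_congr rfl (fun i _ => by rw [hci i])
  have hmm : ∀ a : ℕ, a % m % m = a % m := fun a => Nat.mod_mod_of_dvd a dvd_rfl
  have hbc : ∀ n, b n - b (n+1) = c' n := by
    intro n
    have h1 : (n+1) % m = (n % m + 1) % m := by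
      rw [Nat.add_mod n 1 m, Nat.add_mod (n % m) 1 m, hmm]
    by_cases h : n % m + 1 = m
    · have h2 : (n+1) % m = 0 := by rw [h1, h, Nat.mod_self]
      have h3 : b (n+1) = 0 := by rw [hb]; simp [h2]
      have h4 : n % m = m - 1 := by omega
      have h5 : ∑ i ∈ range m, c' i = (∑ i ∈ range (m-1), c' i) + c' (m-1) := by
        conv_lhs => rw [show m = (m-1) + 1 by omega]
        rw [Finset.sum_range_succ]
      have h6 : c' (m-1) = c' n := by
        apply hc'per
        rw [Nat.mod_eq_of_lt (by omega), h4]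
      rw [h3, hb]
      simp only [h4, sub_zero]
      have : ∑ i ∈ range (m-1), c' i = -c' (m-1) := by
        have := hzero; rw [h5] at this; linarith
      rw [this, h6]; ring
    · have hlt : n % m + 1 < m := by have := Nat.mod_lt n hm; omega
      have h2 : (n+1) % m = n % m + 1 := by rw [h1, Nat.mod_eq_of_lt hlt]
      have h6 : c' (n % m) = c' n := hc'per _ _ (by rw [hmm])
      rw [hb]
      simp only [h2]
      rw [Finset.sum_range_succ]
      rw [← h6]; ring
  -- apply squeeze
  apply squeeze_zero_norm' (a := fun k : ℕ => B * 2 * Real.sqrt (1/((k:ℝ)+1)))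
  · filter_upwards [eventually_ge_atTop 1] with k hk
    have hq := qf_summable k
    have he := ef_summable k
    have hd := df_summable k
    have S1 : Summable (fun n => b n * qf k n) := by
      apply Summable.of_norm_bounded (g := fun n => B * qf k n) (hq.mul_left B)
      intro n
      rw [Real.norm_eq_abs, abs_mul, abs_of_nonneg (qf_nonneg k n)]
      exact mul_le_mul_of_nonneg_right (hbB n) (qf_nonneg k n)
    have S2 : Summable (fun n => b (n+1) * qf k n) := by
      apply Summable.of_norm_bounded (g := fun n => B * qf k n) (hq.mul_left B)
      intro n
      rw [Real.norm_eq_abs, abs_mul, abs_of_nonneg (qf_nonneg k n)]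
      exact mul_le_mul_of_nonneg_right (hbB (n+1)) (qf_nonneg k n)
    have hef_nonneg : ∀ n, 0 ≤ ef k n := by
      intro n; cases n with
      | zero => exact le_refl 0
      | succ j => exact qf_nonneg k j
    have S3 : Summable (fun n => b n * ef k n) := by
      apply Summable.of_norm_bounded (g := fun n => B * ef k n) (he.mul_left B)
      intro n
      rw [Real.norm_eq_abs, abs_mul, abs_of_nonneg (hef_nonneg n)]
      exact mul_le_mul_of_nonneg_right (hbB n) (hef_nonneg n)
    have hshift : ∑' n, b n * ef k n = ∑' n, b (n+1) * qf k n := by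
      rw [Summable.tsum_eq_zero_add S3]
      show b 0 * (0:ℝ) + ∑' n, b (n+1) * qf k n = _
      rw [mul_zero, zero_add]
    have hmain : (∑' n : ℕ, c' n * qf k n) = ∑' n, b n * df k n := by
      calc ∑' n : ℕ, c' n * qf k n = ∑' n : ℕ, (b n - b (n+1)) * qf k n := by
            exact tsum_congr (fun n => by rw [hbc n])
        _ = ∑' n, (b n * qf k n - b (n+1) * qf k n) := by
            exact tsum_congr (fun n => by ring)
        _ = (∑' n, b n * qf k n) - ∑' n, b (n+1) * qf k n := Summable.tsum_sub S1 S2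
        _ = (∑' n, b n * qf k n) - ∑' n, b n * ef k n := by rw [hshift]
        _ = ∑' n, (b n * qf k n - b n * ef k n) := (Summable.tsum_sub S1 S3).symm
        _ = ∑' n, b n * df k n := tsum_congr (fun n => by unfold df; ring)
    have Sbd : Summable (fun n => b n * df k n) := (S1.sub S3).congr (fun n => by unfold df; ring)
    have hbd_norm : Summable (fun n => ‖b n * df k n‖) := by
      apply Summable.of_nonneg_of_le (fun n => norm_nonneg _) (fun n => ?_)
        ((hd.abs).mul_left B)
      rw [Real.norm_eq_abs, abs_mul]
      exact mul_le_mul_of_nonneg_right (hbB n) (abs_nonneg _)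
    have hbound : ‖∑' n : ℕ, c' n * qf k n‖ ≤ B * (2 * qf k (2*k)) := by
      rw [hmain]
      calc ‖∑' n, b n * df k n‖ ≤ ∑' n, ‖b n * df k n‖ := norm_tsum_le_tsum_norm hbd_norm
        _ ≤ ∑' n, B * |df k n| := by
            apply Summable.tsum_le_tsum (fun n => ?_) hbd_norm ((hd.abs).mul_left B)
            rw [Real.norm_eq_abs, abs_mul]
            exact mul_le_mul_of_nonneg_right (hbB n) (abs_nonneg _)
        _ = B * ∑' n, |df k n| := tsum_mul_left
        _ = B * (2 * qf k (2*k)) := by rw [df_abs_tsum]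
    have hBnn : 0 ≤ B := by rw [hB]; positivity
    calc ‖∑' n : ℕ, c' n * ((n.choose k : ℝ) / 2 ^ n)‖ = ‖∑' n : ℕ, c' n * qf k n‖ := rfl
      _ ≤ B * (2 * qf k (2*k)) := hbound
      _ ≤ B * (2 * Real.sqrt (1/((k:ℝ)+1))) := by
          apply mul_le_mul_of_nonneg_left _ hBnn
          exact mul_le_mul_of_nonneg_left (central_bound k) (by norm_num)
      _ = B * 2 * Real.sqrt (1/((k:ℝ)+1)) := by ring
  · have h1 : Tendsto (fun k : ℕ => Real.sqrt (1/((k:ℝ)+1))) atTop (nhds 0) := by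
      have h0 := (Real.continuous_sqrt.tendsto 0).comp tendsto_one_div_add_atTop_nhds_zero_nat
      rw [Real.sqrt_zero] at h0
      exact h0
    simpa using h1.const_mul (B * 2)
end
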